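/- Let H be a linear forest on h vertices and let G be an H-free graph. Let Z_1, …, Z_k be nonempty finite pairwise disjoint vertex sets of G. If there exist pairwise disjoint, pairwise anticomplete vertex sets D^1, …, D^k such that each G[D^i] is connected and Z_i ⊆ D^i for every i, then there exist such sets A^1, …, A^k (pairwise disjoint, pairwise anticomplete, each G[A^i] connected, Z_i ⊆ A^i) with the additional property that |A^i| ≤ (2h-1)·|Z_i| for every i ∈ {1, …, k}. -/

import Mathlib

/-!
A linear forest on `h` vertices is an induced subgraph of the path on `2h - 1` vertices: lay its
components out one after another with a gap between consecutive ones. A shortest path is an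
induced path, so in an `H`-free graph every shortest path has fewer than `2h - 1` vertices.
Inside a connected solution set `Dⁱ`, joining one terminal of `Zᵢ` to every other terminal by a
shortest path of `G[Dⁱ]` therefore gives a connected set of at most `(2h - 1)|Zᵢ|` vertices, and
subsets of the `Dⁱ` stay pairwise disjoint and anticomplete.
-/

/-- A linear forest: an acyclic graph in which every vertex has degree at most 2
(no vertex has three pairwise distinct neighbours). -/
def SimpleGraph.IsLinearForest {V : Type*} (G : SimpleGraph V) : Prop :=
  G.IsAcyclic ∧ ∀ v a b c : V, G.Adj v a → G.Adj v b → G.Adj v c → (a = b ∨ a = c ∨ b = c)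

/-- Two vertex sets are anticomplete if no vertex of one is adjacent to a vertex of
the other. -/
def SimpleGraph.Anticomplete {V : Type*} (G : SimpleGraph V) (A B : Set V) : Prop :=
  ∀ a ∈ A, ∀ b ∈ B, ¬ G.Adj a b

namespace SimpleGraph

open Finset

variable {α V : Type*} {H : SimpleGraph α} {G : SimpleGraph V}

theorem IsAcyclic.exists_subsingleton_neighborSet_inter (hH : H.IsAcyclic) {s : Set α}
    (hs : s.Finite) (hne : s.Nonempty) : ∃ w ∈ s, (H.neighborSet w ∩ s).Subsingleton := by
  have : Finite s := hs
  have : Nonempty s := hne.to_subtype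
  obtain ⟨u, v, p, hp, hmax⟩ := Walk.exists_isPath_forall_isPath_length_le_length (H.induce s)
  -- the first vertex of a longest path can only be adjacent to the second one
  have hsnd : ∀ a : s, (H.induce s).Adj u a → a = p.snd := fun a hadj => by
    refine (hH.induce s).eq_snd_of_adj_start hp hadj (by_contra fun ha => ?_)
    have := hmax a v (.cons hadj.symm p) ((Walk.cons_isPath_iff _ _).2 ⟨hp, ha⟩)
    simp at this
  refine ⟨u, u.2, fun a ⟨ha, has⟩ b ⟨hb, hbs⟩ => ?_⟩
  simpa using (hsnd ⟨a, has⟩ ha).trans (hsnd ⟨b, hbs⟩ hb).symm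

def IsLinePlacement (H : SimpleGraph α) (s : Set α) (f : α → ℕ) : Prop :=
  Set.InjOn f s ∧ ∀ a ∈ s, ∀ b ∈ s, H.Adj a b ↔ f a + 1 = f b ∨ f b + 1 = f a

theorem IsLinePlacement.update_of_isTop [DecidableEq α] {s : Set α} {f : α → ℕ}
    (hf : H.IsLinePlacement s f) {u w : α} (hu : u ∈ s) (htop : ∀ a ∈ s, f a ≤ f u)
    (hw : w ∉ s) (hwu : ∀ a ∈ s, H.Adj w a → a = u) {c : ℕ} (hc : 0 < c)
    (hcu : H.Adj w u ↔ c = 1) :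
    H.IsLinePlacement (insert w s) (Function.update f w (f u + c)) := by
  set g := Function.update f w (f u + c)
  have hgs : Set.EqOn f g s := fun a ha =>
    (Function.update_of_ne (ne_of_mem_of_not_mem ha hw) _ _).symm
  have hgw : g w = f u + c := Function.update_self _ _ _
  have hadj_w : ∀ a ∈ s, H.Adj w a ↔ g w + 1 = g a ∨ g a + 1 = g w := fun a ha => by
    rw [hgw, ← hgs ha]
    have := htop a ha
    constructor
    · intro hwa
      obtain rfl := hwu a ha hwa
      have := hcu.1 hwa
      omega
    · rintro (h | h)
      · omega
      · obtain rfl : a = u := hf.1 ha hu (by omega)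
        exact hcu.2 (by omega)
  refine ⟨(Set.injOn_insert hw).2 ⟨hf.1.congr hgs, ?_⟩, ?_⟩
  · rintro ⟨a, ha, hfa⟩
    have := htop a ha
    rw [← hgs ha, hgw] at hfa
    omega
  · rintro a (rfl | ha) b (rfl | hb)
    · simp
    · exact hadj_w b hb
    · rw [H.adj_comm, hadj_w a ha, or_comm]
    · rw [← hgs ha, ← hgs hb]
      exact hf.2 a ha b hb

theorem IsLinearForest.exists_isLinePlacement (hH : H.IsLinearForest)
    (s : Finset α) {w : α} (hw : w ∈ s) (hleaf : (H.neighborSet w ∩ s).Subsingleton) :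
    ∃ f : α → ℕ, H.IsLinePlacement s f ∧ (∀ a ∈ s, f a ≤ f w) ∧ f w + 2 ≤ 2 * #s := by
  classical
  induction s using Finset.strongInduction generalizing w with
  | H s ih =>
    obtain hs' | hs' := (s.erase w).eq_empty_or_nonempty
    · obtain rfl : s = {w} := ((erase_eq_empty_iff _ _).1 hs').resolve_left (ne_empty_of_mem hw)
      refine ⟨fun _ => 0, ⟨by simp, by simp⟩, by simp, by simp⟩
    -- `w` goes just above the top vertex `u` of the rest, chosen to be the neighbour of `w` if
    -- there is one; otherwise a gap of one is left below `w`
    obtain ⟨u, hu, huleaf, hwu⟩ : ∃ u ∈ s.erase w, (H.neighborSet u ∩ ↑(s.erase w)).Subsingleton ∧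
        ∀ a ∈ s.erase w, H.Adj w a → a = u := by
      by_cases hadj : ∃ u ∈ s.erase w, H.Adj w u
      · obtain ⟨u, hu, hwu⟩ := hadj
        refine ⟨u, hu, ?_, fun a ha hwa =>
          hleaf ⟨hwa, mem_of_mem_erase ha⟩ ⟨hwu, mem_of_mem_erase hu⟩⟩
        rintro a ⟨hua, ha⟩ b ⟨hub, hb⟩
        rcases hH.2 u a b w hua hub hwu.symm with h | h | h
        · exact h
        · exact absurd h (ne_of_mem_erase ha)
        · exact absurd h (ne_of_mem_erase hb)
      · push Not at hadj
        obtain ⟨u, hu, huleaf⟩ :=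
          hH.1.exists_subsingleton_neighborSet_inter (s.erase w).finite_toSet hs'
        exact ⟨u, hu, huleaf, fun a ha hwa => absurd hwa (hadj a ha)⟩
    obtain ⟨f, hf, htop, hbound⟩ := ih _ (erase_ssubset hw) hu huleaf
    refine ⟨Function.update f w (f u + if H.Adj w u then 1 else 2), ?_, fun a ha => ?_, ?_⟩
    · rw [← insert_erase hw, coe_insert]
      exact hf.update_of_isTop hu htop (by simp) hwu (by split_ifs <;> simp)
        (by split_ifs <;> simp [*])
    · rcases eq_or_ne a w with rfl | haw
      · exact le_rfl
      · have := htop a (mem_erase.2 ⟨haw, ha⟩)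
        rw [Function.update_of_ne haw, Function.update_self]
        split_ifs <;> omega
    · have := card_erase_add_one hw
      rw [Function.update_self]
      split_ifs <;> omega

theorem IsLinearForest.nonempty_embedding_pathGraph [Fintype α] (hH : H.IsLinearForest) :
    Nonempty (H ↪g pathGraph (2 * Fintype.card α - 1)) := by
  cases isEmpty_or_nonempty α
  · exact ⟨⟨⟨isEmptyElim, fun a => isEmptyElim a⟩, fun {a} => isEmptyElim a⟩⟩
  obtain ⟨w, -, hw⟩ := hH.1.exists_subsingleton_neighborSet_inter Set.finite_univ Set.univ_nonempty
  obtain ⟨f, ⟨hinj, hadj⟩, htop, hbound⟩ :=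
    hH.exists_isLinePlacement univ (mem_univ w) (by simpa using hw)
  have hlt : ∀ a, f a < 2 * Fintype.card α - 1 := fun a => by
    have := htop a (mem_univ a)
    rw [card_univ] at hbound
    omega
  refine ⟨⟨⟨fun a => ⟨f a, hlt a⟩, fun a b h => hinj (by simp) (by simp) (congrArg Fin.val h)⟩, ?_⟩⟩
  intro a b
  rw [pathGraph_adj, hadj a (by simp) b (by simp)]
  rfl

def pathGraphEmbeddingOfLE {m n : ℕ} (h : m ≤ n) : pathGraph m ↪g pathGraph n where
  toEmbedding := Fin.castLEEmb h
  map_rel_iff' := by simp [pathGraph_adj]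

namespace Walk

variable {u v : V}

theorem le_add_one_of_adj_getVert_of_length_eq_dist (p : G.Walk u v) (hp : p.length = G.dist u v)
    {i j : ℕ} (hj : j ≤ p.length) (hadj : G.Adj (p.getVert i) (p.getVert j)) : j ≤ i + 1 := by
  have := G.dist_le (((p.take i).concat hadj).append (p.drop j))
  rw [length_append, length_concat, take_length, drop_length] at this
  omega

def pathGraphEmbeddingOfLengthEqDist (p : G.Walk u v) (hp : p.length = G.dist u v) :
    pathGraph (p.length + 1) ↪g G where
  toFun i := p.getVert i
  inj' i j h := Fin.ext <| ((p.isPath_of_length_eq_dist hp).getVert_injOn.eq_iff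
    (Nat.le_of_lt_succ i.2) (Nat.le_of_lt_succ j.2)).1 h
  map_rel_iff' {i j} := by
    change G.Adj (p.getVert i) (p.getVert j) ↔ _
    rw [pathGraph_adj]
    refine ⟨fun h => ?_, ?_⟩
    · have hij := p.le_add_one_of_adj_getVert_of_length_eq_dist hp (Nat.le_of_lt_succ j.2) h
      have hji := p.le_add_one_of_adj_getVert_of_length_eq_dist hp (Nat.le_of_lt_succ i.2) h.symm
      have hne : (i : ℕ) ≠ j := fun hij => G.irrefl (hij ▸ h)
      omega
    · rintro (h | h)
      · rw [← h]; exact p.adj_getVert_succ (by omega)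
      · rw [← h]; exact (p.adj_getVert_succ (by omega)).symm

theorem length_add_one_lt_of_free (hfree : ¬ Nonempty (H ↪g G)) {n : ℕ} (e : H ↪g pathGraph n)
    (p : G.Walk u v) (hp : p.length = G.dist u v) : p.length + 1 < n := by
  by_contra! hn
  exact hfree ⟨(p.pathGraphEmbeddingOfLengthEqDist hp).comp ((pathGraphEmbeddingOfLE hn).comp e)⟩

end Walk

theorem exists_small_connected_finset_of_free (hfree : ¬ Nonempty (H ↪g G)) {n : ℕ}
    (e : H ↪g pathGraph n) {D : Set V} (hD : (G.induce D).Connected) {u v : V} (hu : u ∈ D)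
    (hv : v ∈ D) :
    ∃ S : Finset V, u ∈ S ∧ v ∈ S ∧ ↑S ⊆ D ∧ (G.induce ↑S).Connected ∧ #S < n := by
  classical
  obtain ⟨q, hq⟩ := hD.exists_walk_length_eq_dist ⟨u, hu⟩ ⟨v, hv⟩
  have hshort := q.length_add_one_lt_of_free (fun ⟨f⟩ => hfree ⟨(Embedding.induce D).comp f⟩) e hq
  let p : G.Walk u v := q.map (Embedding.induce D).toHom
  have hp : p.support = q.support.map Subtype.val := Walk.support_map _ _
  refine ⟨p.support.toFinset, by simp, by simp, ?_, ?_, ?_⟩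
  · intro x hx
    rw [mem_coe, List.mem_toFinset, hp, List.mem_map] at hx
    obtain ⟨y, -, rfl⟩ := hx
    exact y.2
  · rw [List.coe_toFinset]
    exact p.connected_induce_support
  · calc #p.support.toFinset ≤ p.support.length := List.toFinset_card_le _
      _ = q.length + 1 := by rw [hp, List.length_map, Walk.length_support]
      _ < n := hshort

theorem exists_connected_superset_ncard_le_of_free (hfree : ¬ Nonempty (H ↪g G)) {n : ℕ}
    (e : H ↪g pathGraph n) {D : Set V} (hD : (G.induce D).Connected) {Z : Set V}
    (hZ : Z.Finite) (hZne : Z.Nonempty) (hZD : Z ⊆ D) :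
    ∃ A : Set V, Z ⊆ A ∧ A ⊆ D ∧ (G.induce A).Connected ∧ A.Finite ∧ A.ncard ≤ n * Z.ncard := by
  classical
  obtain ⟨z₀, hz₀⟩ := hZne
  -- the union of short connected sets joining `z₀` to each `z ∈ Z`
  choose! S hz₀S hzS hSD hSconn hScard using fun z (hz : z ∈ Z) =>
    exists_small_connected_finset_of_free hfree e hD (hZD hz₀) (hZD hz)
  refine ⟨hZ.toFinset.biUnion S, fun z hz => ?_, ?_, ?_, finite_toSet _, ?_⟩
  · exact mem_biUnion.2 ⟨z, hZ.mem_toFinset.2 hz, hzS z hz⟩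
  · simpa using fun z hz => hSD z hz
  · refine induce_connected_of_patches z₀ (mem_biUnion.2 ⟨z₀, hZ.mem_toFinset.2 hz₀, hzS z₀ hz₀⟩)
      fun {v} hv => ?_
    obtain ⟨z, hz, hvz⟩ := mem_biUnion.1 hv
    rw [hZ.mem_toFinset] at hz
    exact ⟨S z, fun x hx => mem_biUnion.2 ⟨z, hZ.mem_toFinset.2 hz, hx⟩, hz₀S z hz, hvz,
      (hSconn z hz).preconnected _ _⟩
  · rw [Set.ncard_coe_finset, Set.ncard_eq_toFinset_card Z hZ]
    calc #(hZ.toFinset.biUnion S) ≤ ∑ z ∈ hZ.toFinset, #(S z) := card_biUnion_le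
      _ ≤ #hZ.toFinset • n := sum_le_card_nsmul _ _ _ fun z hz => (hScard z (by simpa using hz)).le
      _ = n * #hZ.toFinset := by rw [smul_eq_mul, mul_comm]

end SimpleGraph

theorem small_solution_exists {V : Type*} (h k : ℕ)
    (H : SimpleGraph (Fin h)) (hH : H.IsLinearForest)
    (G : SimpleGraph V) (hHfree : ¬ Nonempty (H ↪g G))
    (Z : Fin k → Set V)
    (hZne : ∀ i, (Z i).Nonempty) (hZfin : ∀ i, (Z i).Finite)
    (hsol : ∃ D : Fin k → Set V,
      (∀ i j, i ≠ j → Disjoint (D i) (D j)) ∧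
      (∀ i j, i ≠ j → G.Anticomplete (D i) (D j)) ∧
      (∀ i, (G.induce (D i)).Connected) ∧
      (∀ i, Z i ⊆ D i)) :
    ∃ A : Fin k → Set V,
      (∀ i j, i ≠ j → Disjoint (A i) (A j)) ∧
      (∀ i j, i ≠ j → G.Anticomplete (A i) (A j)) ∧
      (∀ i, (G.induce (A i)).Connected) ∧
      (∀ i, Z i ⊆ A i) ∧
      (∀ i, (A i).Finite ∧ (A i).ncard ≤ (2 * h - 1) * (Z i).ncard) := by
  obtain ⟨D, hDdisj, hDanti, hDconn, hZD⟩ := hsol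
  obtain ⟨e⟩ := hH.nonempty_embedding_pathGraph
  rw [Fintype.card_fin] at e
  choose A hZA hAD hAconn hAfin hAcard using fun i =>
    SimpleGraph.exists_connected_superset_ncard_le_of_free hHfree e (hDconn i) (hZfin i) (hZne i)
      (hZD i)
  refine ⟨A, fun i j hij => (hDdisj i j hij).mono (hAD i) (hAD j), ?_, hAconn, hZA,
    fun i => ⟨hAfin i, hAcard i⟩⟩
  exact fun i j hij a ha b hb => hDanti i j hij a (hAD i ha) b (hAD j hb)
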